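/- Inequality B: Let a_1, a_2, … be positive integers and let k ≥ 2 satisfy gcd(a_1,…,a_k) = 1. Then for every natural number n with n ≥ s^-_k, the denumerant satisfies D^a_k(n) ≥ (1/(a_1 a_2 ⋯ a_k)) · ∑_{i=0}^{k−2} [k−2 i]^a_2 · (n − s^-_k)^{k−1−i} / (k−1−i)!, as an inequality of rational numbers. -/

import Mathlib

/-- The denumerant: number of tuples `(x 1, …, x k)` of naturals with
`a 1 * x 1 + ⋯ + a k * x k = n`. -/
noncomputable def D (a : ℕ → ℕ) (k n : ℕ) : ℕ :=
  {x : Fin k → ℕ | ∑ i, a (i.1 + 1) * x i = n}.ncard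

/-- The cumulative denumerant: number of tuples with
`a 1 * x 1 + ⋯ + a k * x k ≤ n`. -/
noncomputable def Dhat (a : ℕ → ℕ) (k n : ℕ) : ℕ :=
  {x : Fin k → ℕ | ∑ i, a (i.1 + 1) * x i ≤ n}.ncard

/-- `gcdUpTo a i = gcd (a 1, …, a i)`. -/
def gcdUpTo (a : ℕ → ℕ) (i : ℕ) : ℕ := (Finset.Icc 1 i).gcd a

/-- The sequence `s⁺` of rationals. -/
def sPlus (a : ℕ → ℕ) : ℕ → ℚ
  | 0 => 0
  | 1 => (a 1 * a 2 : ℚ) / (2 * gcdUpTo a 2)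
  | i + 2 => sPlus a (i + 1) + ((gcdUpTo a (i + 1) : ℚ) / (2 * gcdUpTo a (i + 2))) * a (i + 2)

/-- The sequence `s⁻` of integers. -/
def sMinus (a : ℕ → ℕ) : ℕ → ℤ
  | 0 => 0
  | 1 => -(a 1 : ℤ)
  | i + 2 => sMinus a (i + 1) +
      (((gcdUpTo a (i + 1) / gcdUpTo a (i + 2) : ℕ) : ℤ) - 1) * (a (i + 2) : ℤ)

/-- Auxiliary recursion for the Blom–Fröberg number, with `m : ℕ`. -/
def bfAux (a : ℕ → ℕ) (r : ℕ) : ℕ → ℤ → ℚ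
  | 0, l => if l = 0 then 1 else 0
  | m + 1, l =>
      if l < 0 ∨ (m + 1 : ℤ) < l then 0
      else bfAux a r m l + (a (m + 1 + r) : ℚ) / 2 * bfAux a r m (l - 1)

/-- The Blom–Fröberg number `[m ℓ]^a_r`. -/
def bf (a : ℕ → ℕ) (r : ℕ) (m l : ℤ) : ℚ :=
  if m < 0 then 0 else bfAux a r m.toNat l



def Sh (c : ℕ → ℚ) : ℕ → ℚ := fun j => if j = 0 then 0 else c (j - 1)

def Ev (c : ℕ → ℚ) (N : ℕ) (t : ℚ) : ℚ :=
  ∑ j ∈ Finset.range N, c j * t ^ j / (Nat.factorial j : ℚ)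

def cf (a : ℕ → ℕ) : ℕ → ℕ → ℚ
  | 0, _ => 0
  | 1, _ => 0
  | 2, j => if j = 1 then 1 else 0
  | k + 3, j => Sh (cf a (k + 2)) j + (a (k + 3) : ℚ) / 2 * cf a (k + 2) j

lemma cf_zero (a : ℕ → ℕ) (k : ℕ) : cf a k 0 = 0 := by
  match k with
  | 0 => rfl
  | 1 => rfl
  | 2 => rfl
  | k + 3 => simp [cf, Sh, cf_zero a (k+2)]

lemma cf_nonneg (a : ℕ → ℕ) (k j : ℕ) : 0 ≤ cf a k j := by
  match k with
  | 0 => exact le_refl 0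
  | 1 => exact le_refl 0
  | 2 => dsimp [cf]; split <;> norm_num
  | k + 3 =>
    have h1 := cf_nonneg a (k+2) j
    have h2 : 0 ≤ Sh (cf a (k+2)) j := by
      dsimp [Sh]; split; · exact le_refl 0
      · exact cf_nonneg a (k+2) (j-1)
    have : (0:ℚ) ≤ (a (k+3) : ℚ) / 2 := by positivity
    dsimp [cf]; positivity

lemma cf_eq_zero_of_le (a : ℕ → ℕ) (k j : ℕ) (h : k ≤ j) : cf a k j = 0 := by
  match k with
  | 0 => rfl
  | 1 => rfl
  | 2 => dsimp [cf]; rw [if_neg]; omega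
  | k + 3 =>
    have h1 : cf a (k+2) j = 0 := cf_eq_zero_of_le a (k+2) j (by omega)
    have h2 : Sh (cf a (k+2)) j = 0 := by
      dsimp [Sh]; rw [if_neg (by omega)]
      exact cf_eq_zero_of_le a (k+2) (j-1) (by omega)
    dsimp [cf]; rw [h1, h2]; ring

lemma cf_succ (a : ℕ → ℕ) (k : ℕ) (hk : 2 ≤ k) (j : ℕ) :
    cf a (k + 1) j = Sh (cf a k) j + (a (k + 1) : ℚ) / 2 * cf a k j := by
  obtain ⟨m, rfl⟩ : ∃ m, k = m + 2 := ⟨k - 2, by omega⟩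
  rfl

lemma bfAux_out (a : ℕ → ℕ) (r : ℕ) :
    ∀ (m : ℕ) (l : ℤ), (l < 0 ∨ (m : ℤ) < l) → bfAux a r m l = 0
  | 0, l, h => by dsimp [bfAux]; rw [if_neg]; omega
  | m + 1, l, h => by
    have hc : l < 0 ∨ ((m : ℤ) + 1) < l := by push_cast at h; omega
    dsimp [bfAux]; rw [if_pos hc]

lemma bfAux_eq_cf (a : ℕ → ℕ) :
    ∀ (m i : ℕ), i ≤ m → bfAux a 2 m (i : ℤ) = cf a (m + 2) (m + 1 - i)
  | 0, i, h => by
    interval_cases i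
    dsimp [bfAux, cf]
  | m + 1, i, h => by
    have hne : ¬((i : ℤ) < 0 ∨ ((m : ℤ) + 1) < (i : ℤ)) := by push_cast; omega
    dsimp [bfAux]
    rw [if_neg hne]
    have hT : cf a (m + 1 + 2) (m + 2 - i)
        = Sh (cf a (m + 2)) (m + 2 - i) + (a (m + 3) : ℚ) / 2 * cf a (m + 2) (m + 2 - i) := rfl
    have hSh : Sh (cf a (m + 2)) (m + 2 - i) = cf a (m + 2) (m + 1 - i) := by
      dsimp [Sh]; rw [if_neg (by omega)]; congr 1; omega
    have h1 : bfAux a 2 m (i : ℤ) = cf a (m + 2) (m + 1 - i) := by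
      rcases Nat.lt_or_ge i (m + 1) with hi | hi
      · exact bfAux_eq_cf a m i (by omega)
      · have : i = m + 1 := by omega
        subst this
        rw [bfAux_out a 2 m _ (by right; push_cast; omega),
          show m + 1 - (m + 1) = 0 from by omega, cf_zero]
    have h2 : bfAux a 2 m ((i : ℤ) - 1) = cf a (m + 2) (m + 2 - i) := by
      rcases Nat.eq_zero_or_pos i with hi | hi
      · subst hi
        rw [bfAux_out a 2 m _ (by left; omega),
          cf_eq_zero_of_le a (m + 2) (m + 2 - 0) (by omega)]
      · have hc : (i : ℤ) - 1 = ((i - 1 : ℕ) : ℤ) := by push_cast; omega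
        rw [hc, bfAux_eq_cf a m (i - 1) (by omega)]
        congr 1; omega
    rw [hT, hSh, h1, h2]

lemma bf_sum_eq (a : ℕ → ℕ) (k : ℕ) (hk : 2 ≤ k) (t : ℚ) :
    ∑ i ∈ Finset.range (k - 1),
        bf a 2 ((k : ℤ) - 2) (i : ℤ) * t ^ (k - 1 - i) / (Nat.factorial (k - 1 - i) : ℚ)
      = Ev (cf a k) k t := by
  obtain ⟨m, rfl⟩ : ∃ m, k = m + 2 := ⟨k - 2, by omega⟩
  have key : ∀ i ∈ Finset.range (m + 1),
      bf a 2 (((m + 2 : ℕ) : ℤ) - 2) (i : ℤ) * t ^ (m + 2 - 1 - i) / (Nat.factorial (m + 2 - 1 - i) : ℚ)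
      = cf a (m + 2) (m + 1 - i) * t ^ (m + 1 - i) / (Nat.factorial (m + 1 - i) : ℚ) := by
    intro i hi
    simp only [Finset.mem_range] at hi
    have h2 : (((m + 2 : ℕ) : ℤ) - 2) = (m : ℤ) := by push_cast; ring
    have : bf a 2 (((m + 2 : ℕ) : ℤ) - 2) (i : ℤ) = bfAux a 2 m (i : ℤ) := by
      rw [h2, bf, if_neg (by omega), Int.toNat_natCast]
    rw [this, bfAux_eq_cf a m i (by omega)]
    have h' : m + 1 - i = m + 2 - 1 - i := by omega
    rw [h']
  rw [show m + 2 - 1 = m + 1 from rfl] at key ⊢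
  rw [Finset.sum_congr rfl key]
  have reflect := Finset.sum_range_reflect
    (fun j => cf a (m + 2) (j + 1) * t ^ (j + 1) / (Nat.factorial (j + 1) : ℚ)) (m + 1)
  have lhs_eq : ∑ i ∈ Finset.range (m + 1),
      cf a (m + 2) (m + 1 - i) * t ^ (m + 1 - i) / (Nat.factorial (m + 1 - i) : ℚ)
      = ∑ j ∈ Finset.range (m + 1),
        cf a (m + 2) (m + 1 - 1 - j + 1) * t ^ (m + 1 - 1 - j + 1) / (Nat.factorial (m + 1 - 1 - j + 1) : ℚ) := by
    apply Finset.sum_congr rfl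
    intro i hi
    simp only [Finset.mem_range] at hi
    have h' : m + 1 - 1 - i + 1 = m + 1 - i := by omega
    rw [h']
  rw [lhs_eq, reflect, Ev]
  conv_rhs => rw [Finset.sum_range_succ'
    (fun j => cf a (m + 2) j * t ^ j / (Nat.factorial j : ℚ)) (m + 1)]
  rw [cf_zero]
  simp

lemma Sh_nonneg (c : ℕ → ℚ) (hc : ∀ j, 0 ≤ c j) (j : ℕ) : 0 ≤ Sh c j := by
  dsimp [Sh]; split
  · exact le_refl 0
  · exact hc _

lemma Ev_nonneg (c : ℕ → ℚ) (N : ℕ) (t : ℚ) (hc : ∀ j, 0 ≤ c j) (ht : 0 ≤ t) :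
    0 ≤ Ev c N t := by
  apply Finset.sum_nonneg
  intro j _
  have := hc j
  positivity

lemma Ev_mono (c : ℕ → ℚ) (N : ℕ) (u v : ℚ) (hc : ∀ j, 0 ≤ c j) (hu : 0 ≤ u) (huv : u ≤ v) :
    Ev c N u ≤ Ev c N v := by
  apply Finset.sum_le_sum
  intro j _
  have h1 : u ^ j ≤ v ^ j := pow_le_pow_left₀ hu huv j
  have h2 := hc j
  gcongr

lemma EvSh (c : ℕ → ℚ) (N : ℕ) (t : ℚ) :
    Ev (Sh c) (N + 1) t = ∑ j ∈ Finset.range N, c j * t ^ (j + 1) / (Nat.factorial (j + 1) : ℚ) := by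
  rw [Ev, Finset.sum_range_succ']
  simp [Sh]

lemma pair_pow (u v : ℚ) (hu : 0 ≤ u) (huv : u ≤ v) (i j : ℕ) (hij : i ≤ j) :
    v ^ i * u ^ (j - i) + v ^ (j - i) * u ^ i ≤ v ^ j + u ^ j := by
  have e1 : v ^ i * v ^ (j - i) = v ^ j := by rw [← pow_add]; congr 1; omega
  have e2 : u ^ i * u ^ (j - i) = u ^ j := by rw [← pow_add]; congr 1; omega
  have h1 : 0 ≤ (v ^ i - u ^ i) * (v ^ (j - i) - u ^ (j - i)) :=
    mul_nonneg (sub_nonneg.2 (pow_le_pow_left₀ hu huv i))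
      (sub_nonneg.2 (pow_le_pow_left₀ hu huv (j - i)))
  nlinarith [h1, e1, e2]

lemma geom_half (u v : ℚ) (hu : 0 ≤ u) (huv : u ≤ v) (j : ℕ) :
    2 * ∑ i ∈ Finset.range (j + 1), v ^ i * u ^ (j - i) ≤ ((j:ℚ) + 1) * (v ^ j + u ^ j) := by
  have refl := Finset.sum_range_reflect (fun i => v ^ i * u ^ (j - i)) (j + 1)
  have : 2 * ∑ i ∈ Finset.range (j + 1), v ^ i * u ^ (j - i)
      = ∑ i ∈ Finset.range (j + 1), (v ^ i * u ^ (j - i) + v ^ (j - i) * u ^ i) := by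
    rw [Finset.sum_add_distrib]
    rw [show ∑ i ∈ Finset.range (j + 1), v ^ (j - i) * u ^ i
        = ∑ i ∈ Finset.range (j + 1), v ^ i * u ^ (j - i) from ?_]
    · ring
    · rw [← refl]
      apply Finset.sum_congr rfl
      intro i hi
      simp only [Finset.mem_range] at hi
      have : j - (j + 1 - 1 - i) = i := by omega
      rw [this, show j + 1 - 1 - i = j - i from by omega]
  rw [this]
  calc ∑ i ∈ Finset.range (j + 1), (v ^ i * u ^ (j - i) + v ^ (j - i) * u ^ i)
      ≤ ∑ i ∈ Finset.range (j + 1), (v ^ j + u ^ j) := by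
        apply Finset.sum_le_sum
        intro i hi
        simp only [Finset.mem_range] at hi
        exact pair_pow u v hu huv i j (by omega)
    _ = ((j:ℚ) + 1) * (v ^ j + u ^ j) := by
        rw [Finset.sum_const, Finset.card_range]; push_cast; ring

lemma key_pow (u v : ℚ) (hu : 0 ≤ u) (huv : u ≤ v) (j : ℕ) :
    v ^ (j + 1) - u ^ (j + 1) ≤ (v - u) * (((j:ℚ) + 1) * (v ^ j + u ^ j)) / 2 := by
  have geom := geom_sum₂_mul v u (j + 1)
  simp only [Nat.add_sub_cancel] at geom
  have h1 := geom_half u v hu huv j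
  have h2 : 0 ≤ v - u := sub_nonneg.2 huv
  nlinarith [mul_le_mul_of_nonneg_left h1 h2]

lemma trapezoid (c : ℕ → ℚ) (N : ℕ) (hc : ∀ j, 0 ≤ c j) (u v : ℚ) (hu : 0 ≤ u) (huv : u ≤ v) :
    Ev (Sh c) (N + 1) v - Ev (Sh c) (N + 1) u ≤ (v - u) * (Ev c N v + Ev c N u) / 2 := by
  rw [EvSh, EvSh, Ev, Ev, ← Finset.sum_sub_distrib]
  have : (v - u) * ((∑ j ∈ Finset.range N, c j * v ^ j / (Nat.factorial j : ℚ))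
      + ∑ j ∈ Finset.range N, c j * u ^ j / (Nat.factorial j : ℚ)) / 2
      = ∑ j ∈ Finset.range N,
        (v - u) * (c j * v ^ j / (Nat.factorial j : ℚ) + c j * u ^ j / (Nat.factorial j : ℚ)) / 2 := by
    rw [← Finset.sum_add_distrib, Finset.mul_sum, Finset.sum_div]
  rw [this]
  apply Finset.sum_le_sum
  intro j _
  have hF : (0:ℚ) < (Nat.factorial j : ℚ) := by exact_mod_cast Nat.factorial_pos j
  have hFs : ((Nat.factorial (j+1) : ℕ) : ℚ) = ((j:ℚ) + 1) * (Nat.factorial j : ℚ) := by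
    rw [Nat.factorial_succ]; push_cast; ring
  have hkey := key_pow u v hu huv j
  have hcj := hc j
  have hmul := mul_le_mul_of_nonneg_left hkey hcj
  rw [hFs]
  calc c j * v ^ (j + 1) / (((j:ℚ) + 1) * (Nat.factorial j : ℚ))
        - c j * u ^ (j + 1) / (((j:ℚ) + 1) * (Nat.factorial j : ℚ))
      = (c j * (v ^ (j + 1) - u ^ (j + 1))) / (((j:ℚ) + 1) * (Nat.factorial j : ℚ)) := by
        rw [mul_sub, sub_div]
    _ ≤ (c j * ((v - u) * (((j:ℚ) + 1) * (v ^ j + u ^ j)) / 2))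
          / (((j:ℚ) + 1) * (Nat.factorial j : ℚ)) := by gcongr <;> positivity
    _ = (v - u) * (c j * v ^ j / (Nat.factorial j : ℚ)
          + c j * u ^ j / (Nat.factorial j : ℚ)) / 2 := by
        field_simp

lemma edge (c : ℕ → ℚ) (N : ℕ) (hc : ∀ j, 0 ≤ c j) (hc0 : c 0 = 0) (t h : ℚ)
    (ht : 0 ≤ t) (hth : t ≤ h) :
    Ev (Sh c) (N + 1) t ≤ h / 2 * Ev c N t := by
  rw [EvSh, Ev, Finset.mul_sum]
  apply Finset.sum_le_sum
  intro j _
  match j with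
  | 0 => simp [hc0]
  | j + 1 =>
    have hF : (0:ℚ) < (Nat.factorial (j+1) : ℚ) := by exact_mod_cast Nat.factorial_pos (j+1)
    have hcj := hc (j + 1)
    have hpow : (0:ℚ) ≤ t ^ (j + 1) := pow_nonneg ht _
    have hFs : ((Nat.factorial (j+2) : ℕ) : ℚ) = ((j:ℚ) + 2) * (Nat.factorial (j+1) : ℚ) := by
      rw [Nat.factorial_succ]; push_cast; ring
    rw [show j + 1 + 1 = j + 2 from rfl, hFs]
    rw [div_le_iff₀ (by positivity), pow_succ]
    have expand : h / 2 * (c (j+1) * t ^ (j+1) / (Nat.factorial (j+1) : ℚ))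
        * (((j:ℚ) + 2) * (Nat.factorial (j+1) : ℚ))
        = ((j:ℚ) + 2) * h / 2 * (c (j+1) * t ^ (j+1)) := by
      field_simp
    rw [expand]
    have h2t : t * 2 ≤ ((j:ℚ) + 2) * h := by nlinarith
    nlinarith [mul_le_mul_of_nonneg_right h2t (mul_nonneg hcj hpow)]

lemma sum_lb (c : ℕ → ℚ) (N : ℕ) (hc : ∀ j, 0 ≤ c j) (hc0 : c 0 = 0) (h : ℚ) (hh : 0 < h) :
    ∀ (L : ℕ) (t : ℚ), 0 ≤ t → (L : ℚ) * h ≤ t → t < ((L : ℚ) + 1) * h →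
      1 / h * Ev (Sh c) (N + 1) t + 1 / 2 * Ev c N t
        ≤ ∑ l ∈ Finset.range (L + 1), Ev c N (t - (l : ℚ) * h) := by
  intro L
  induction L with
  | zero =>
    intro t ht h0 h1
    rw [Finset.sum_range_one]
    simp only [Nat.cast_zero, zero_mul, sub_zero]
    push_cast at h1
    have hQ := edge c N hc hc0 t h ht (by linarith)
    calc 1 / h * Ev (Sh c) (N + 1) t + 1 / 2 * Ev c N t
        ≤ 1 / h * (h / 2 * Ev c N t) + 1 / 2 * Ev c N t := by
          apply add_le_add_left
          apply mul_le_mul_of_nonneg_left hQ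
          positivity
      _ = Ev c N t := by field_simp; ring
  | succ L ih =>
    intro t ht h0 h1
    have hL0 : (0:ℚ) ≤ (L:ℚ) := Nat.cast_nonneg L
    push_cast at h0 h1
    have hth : h ≤ t := by nlinarith
    have ht' : 0 ≤ t - h := by linarith
    have h0' : (L : ℚ) * h ≤ t - h := by linarith
    have h1' : t - h < ((L : ℚ) + 1) * h := by linarith
    have IH := ih (t - h) ht' h0' h1'
    have sumsplit : ∑ l ∈ Finset.range (L + 2), Ev c N (t - (l : ℚ) * h)
        = (∑ l ∈ Finset.range (L + 1), Ev c N ((t - h) - (l : ℚ) * h)) + Ev c N t := by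
      rw [Finset.sum_range_succ' (fun l => Ev c N (t - (l : ℚ) * h)) (L + 1)]
      simp only [Nat.cast_zero, zero_mul, sub_zero]
      congr 1
      apply Finset.sum_congr rfl
      intro l _
      congr 1
      push_cast
      ring_nf
    rw [sumsplit]
    have trap := trapezoid c N hc (t - h) t ht' (by linarith)
    -- (1/h) * (Q t - Q (t-h)) ≤ (1/2) * (q t + q (t-h))
    have step : 1 / h * Ev (Sh c) (N + 1) t + 1 / 2 * Ev c N t
        ≤ (1 / h * Ev (Sh c) (N + 1) (t - h) + 1 / 2 * Ev c N (t - h)) + Ev c N t := by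
      have := mul_le_mul_of_nonneg_left trap (le_of_lt (one_div_pos.2 hh))
      have hexp : 1 / h * ((t - (t - h)) * (Ev c N t + Ev c N (t - h)) / 2)
          = 1 / 2 * Ev c N t + 1 / 2 * Ev c N (t - h) := by
        field_simp
        ring
      rw [hexp] at this
      linarith
    linarith

lemma gcdUpTo_one (a : ℕ → ℕ) : gcdUpTo a 1 = a 1 := by
  simp [gcdUpTo]

lemma gcdUpTo_succ (a : ℕ → ℕ) (k : ℕ) :
    gcdUpTo a (k + 1) = Nat.gcd (gcdUpTo a k) (a (k + 1)) := by
  have hins : Finset.Icc 1 (k + 1) = insert (k + 1) (Finset.Icc 1 k) := by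
    ext x
    simp only [Finset.mem_Icc, Finset.mem_insert]
    omega
  rw [gcdUpTo, gcdUpTo, hins, Finset.gcd_insert]
  exact Nat.gcd_comm _ _

lemma gcdUpTo_dvd (a : ℕ → ℕ) (k i : ℕ) (h1 : 1 ≤ i) (h2 : i ≤ k) : gcdUpTo a k ∣ a i :=
  Finset.gcd_dvd (Finset.mem_Icc.mpr ⟨h1, h2⟩)

lemma gcdUpTo_pos (a : ℕ → ℕ) (ha : ∀ i, 1 ≤ a i) (k : ℕ) (hk : 1 ≤ k) :
    0 < gcdUpTo a k := by
  rcases Nat.eq_zero_or_pos (gcdUpTo a k) with h | h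
  · have := gcdUpTo_dvd a k 1 le_rfl hk
    rw [h] at this
    have := Nat.eq_zero_of_zero_dvd this
    have := ha 1
    omega
  · exact h

lemma gcdUpTo_succ_dvd (a : ℕ → ℕ) (k : ℕ) : gcdUpTo a (k + 1) ∣ gcdUpTo a k := by
  rw [gcdUpTo_succ]; exact Nat.gcd_dvd_left _ _

lemma gcdUpTo_succ_dvd_a (a : ℕ → ℕ) (k : ℕ) : gcdUpTo a (k + 1) ∣ a (k + 1) := by
  rw [gcdUpTo_succ]; exact Nat.gcd_dvd_right _ _

lemma sMinus_succ (a : ℕ → ℕ) (k : ℕ) (hk : 1 ≤ k) :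
    sMinus a (k + 1) = sMinus a k +
      (((gcdUpTo a k / gcdUpTo a (k + 1) : ℕ) : ℤ) - 1) * (a (k + 1) : ℤ) := by
  obtain ⟨i, rfl⟩ : ∃ i, k = i + 1 := ⟨k - 1, by omega⟩
  rfl

lemma sMinus_ge (a : ℕ → ℕ) (ha : ∀ i, 1 ≤ a i) :
    ∀ k, 1 ≤ k → -(gcdUpTo a k : ℤ) ≤ sMinus a k := by
  intro k
  induction k with
  | zero => omega
  | succ k ih =>
    intro _
    rcases Nat.eq_zero_or_pos k with rfl | hk
    · rw [show (0:ℕ)+1 = 1 from rfl, gcdUpTo_one]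
      exact le_of_eq rfl
    · have hd' := gcdUpTo_succ_dvd a k
      have hda := gcdUpTo_succ_dvd_a a k
      have hdpos := gcdUpTo_pos a ha k hk
      have hd'pos := gcdUpTo_pos a ha (k+1) (by omega)
      have hq : (gcdUpTo a k / gcdUpTo a (k+1)) * gcdUpTo a (k+1) = gcdUpTo a k :=
        Nat.div_mul_cancel hd'
      have hq1 : 1 ≤ gcdUpTo a k / gcdUpTo a (k+1) := by
        rcases Nat.eq_zero_or_pos (gcdUpTo a k / gcdUpTo a (k+1)) with h | h
        · rw [h] at hq; omega
        · omega
      have haA : gcdUpTo a (k+1) ≤ a (k+1) := Nat.le_of_dvd (by have := ha (k+1); omega) hda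
      rw [sMinus_succ a k hk]
      have ihk := ih hk
      have key : (gcdUpTo a k : ℤ) - gcdUpTo a (k+1)
          ≤ (((gcdUpTo a k / gcdUpTo a (k+1) : ℕ) : ℤ) - 1) * (a (k+1) : ℤ) := by
        have h1 : (((gcdUpTo a k / gcdUpTo a (k+1) : ℕ) : ℤ) - 1) * (gcdUpTo a (k+1) : ℤ)
            = (gcdUpTo a k : ℤ) - gcdUpTo a (k+1) := by
          have hqz : ((gcdUpTo a k / gcdUpTo a (k+1) : ℕ) : ℤ) * (gcdUpTo a (k+1) : ℤ)
              = (gcdUpTo a k : ℤ) := by exact_mod_cast congrArg (Nat.cast : ℕ → ℤ) hq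
          rw [sub_mul, one_mul, hqz]
        have h2 : (((gcdUpTo a k / gcdUpTo a (k+1) : ℕ) : ℤ) - 1) * (gcdUpTo a (k+1) : ℤ)
            ≤ (((gcdUpTo a k / gcdUpTo a (k+1) : ℕ) : ℤ) - 1) * (a (k+1) : ℤ) := by
          apply mul_le_mul_of_nonneg_left
          · exact_mod_cast haA
          · have : (1:ℤ) ≤ ((gcdUpTo a k / gcdUpTo a (k+1) : ℕ) : ℤ) := by exact_mod_cast hq1
            omega
        omega
      omega

lemma solFinite (a : ℕ → ℕ) (ha : ∀ i, 1 ≤ a i) (k n : ℕ) :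
    {x : Fin k → ℕ | ∑ i, a (i.1 + 1) * x i = n}.Finite := by
  apply Set.Finite.subset (Set.finite_Icc (fun _ : Fin k => 0) (fun _ : Fin k => n))
  intro x hx
  simp only [Set.mem_setOf_eq] at hx
  rw [Set.mem_Icc]
  constructor
  · intro i; exact Nat.zero_le _
  · intro i
    have h1 : a (i.1 + 1) * x i ≤ n := by
      rw [← hx]
      exact Finset.single_le_sum (f := fun j : Fin k => a (j.1 + 1) * x j)
        (fun j _ => Nat.zero_le _) (Finset.mem_univ i)
    have h2 : x i ≤ a (i.1 + 1) * x i := Nat.le_mul_of_pos_left _ (ha _)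
    exact le_trans h2 h1

lemma D_eq_card (a : ℕ → ℕ) (ha : ∀ i, 1 ≤ a i) (k n : ℕ) :
    D a k n = (solFinite a ha k n).toFinset.card :=
  Set.ncard_eq_toFinset_card _ _

lemma D_one_ge (a : ℕ → ℕ) (ha : ∀ i, 1 ≤ a i) (n : ℕ) (hd : a 1 ∣ n) :
    1 ≤ D a 1 n := by
  rw [D_eq_card a ha]
  rw [Finset.one_le_card]
  refine ⟨fun _ => n / a 1, ?_⟩
  rw [Set.Finite.mem_toFinset]
  simp only [Set.mem_setOf_eq]
  rw [Fin.sum_univ_one]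
  exact Nat.mul_div_cancel' hd

lemma snoc_inj (k : ℕ) (w : ℕ) : Function.Injective (fun y : Fin k → ℕ => (Fin.snoc y w : Fin (k+1) → ℕ)) := by
  intro y y' h
  have := congrArg (Fin.init (n := k)) h
  simpa [Fin.init_snoc] using this

lemma D_step_ge (a : ℕ → ℕ) (ha : ∀ i, 1 ≤ a i) (k n : ℕ) (W : Finset ℕ)
    (hW : ∀ w ∈ W, a (k + 1) * w ≤ n) :
    ∑ w ∈ W, D a k (n - a (k + 1) * w) ≤ D a (k + 1) n := by
  classical
  set F : ℕ → Finset (Fin (k + 1) → ℕ) := fun w =>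
    (solFinite a ha k (n - a (k + 1) * w)).toFinset.image
      (fun y : Fin k → ℕ => (Fin.snoc y w : Fin (k+1) → ℕ)) with hF
  have hcard : ∀ w, (F w).card = D a k (n - a (k + 1) * w) := by
    intro w
    rw [hF]
    rw [Finset.card_image_of_injective _ (snoc_inj k w), D_eq_card a ha]
  have hlast : ∀ w, ∀ x ∈ F w, x (Fin.last k) = w := by
    intro w x hx
    rw [hF, Finset.mem_image] at hx
    obtain ⟨y, _, rfl⟩ := hx
    exact Fin.snoc_last _ _
  have hdisj : ∀ w ∈ W, ∀ w' ∈ W, w ≠ w' → Disjoint (F w) (F w') := by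
    intro w _ w' _ hne
    rw [Finset.disjoint_left]
    intro x hx hx'
    exact hne ((hlast w x hx).symm.trans (hlast w' x hx'))
  have hsub : W.biUnion F ⊆ (solFinite a ha (k + 1) n).toFinset := by
    intro x hx
    rw [Finset.mem_biUnion] at hx
    obtain ⟨w, hw, hx⟩ := hx
    rw [hF, Finset.mem_image] at hx
    obtain ⟨y, hy, rfl⟩ := hx
    rw [Set.Finite.mem_toFinset] at hy ⊢
    simp only [Set.mem_setOf_eq] at hy ⊢
    rw [Fin.sum_univ_castSucc]
    have hterm : ∀ i : Fin k,
        a ((Fin.castSucc i).1 + 1) * (Fin.snoc y w : Fin (k+1) → ℕ) (Fin.castSucc i)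
        = a (i.1 + 1) * y i := by
      intro i
      rw [Fin.snoc_castSucc]
      rfl
    rw [Finset.sum_congr rfl (fun i _ => hterm i)]
    rw [hy]
    have : (Fin.snoc y w : Fin (k+1) → ℕ) (Fin.last k) = w := Fin.snoc_last _ _
    rw [this, Fin.val_last]
    exact Nat.sub_add_cancel (hW w hw)
  calc ∑ w ∈ W, D a k (n - a (k + 1) * w) = ∑ w ∈ W, (F w).card := by
        exact Finset.sum_congr rfl (fun w _ => (hcard w).symm)
    _ = (W.biUnion F).card := (Finset.card_biUnion hdisj).symm
    _ ≤ (solFinite a ha (k + 1) n).toFinset.card := Finset.card_le_card hsub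
    _ = D a (k + 1) n := (D_eq_card a ha (k + 1) n).symm


lemma exists_x0 (d A d' : ℕ) (hd : 0 < d) (hd' : 0 < d') (hdd : d' ∣ d) (hdA : d' ∣ A)
    (hgcd : Nat.gcd d A = d') (n : ℤ) (hn : (d' : ℤ) ∣ n) :
    ∃ x0 : ℕ, x0 < d / d' ∧ (d : ℤ) ∣ (n - (A : ℤ) * (x0 : ℕ)) := by
  obtain ⟨m, rfl⟩ := hn
  set s : ℕ := d / d' with hs
  have hsd : d' * s = d := Nat.mul_div_cancel' hdd
  have hspos : 0 < s := by
    rcases Nat.eq_zero_or_pos s with h | h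
    · rw [h] at hsd; omega
    · exact h
  have bezout := Nat.gcd_eq_gcd_ab d A
  rw [hgcd] at bezout
  set α := Nat.gcdA d A
  set β := Nat.gcdB d A
  -- (d' : ℤ) = d * α + A * β
  set cand : ℤ := (m * β) % (s : ℤ) with hcand
  have hcnb : 0 ≤ cand := Int.emod_nonneg _ (by exact_mod_cast hspos.ne')
  have hclt : cand < (s : ℤ) := Int.emod_lt_of_pos _ (by exact_mod_cast hspos)
  refine ⟨cand.toNat, ?_, ?_⟩
  · omega
  · have hc : (cand.toNat : ℤ) = cand := Int.toNat_of_nonneg hcnb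
    rw [hc]
    have hmod : (s : ℤ) ∣ (m * β - cand) := Int.dvd_self_sub_of_emod_eq rfl
    obtain ⟨q, hq⟩ := hmod
    obtain ⟨A', hA'⟩ := hdA
    have key : (d' : ℤ) * m - (A : ℤ) * cand
        = (d : ℤ) * (m * α) + (d : ℤ) * (A' * q) := by
      have h1 : ((d' : ℕ) : ℤ) = (d : ℤ) * α + (A : ℤ) * β := by exact_mod_cast bezout
      have h2 : (A : ℤ) = (d' : ℤ) * (A' : ℤ) := by exact_mod_cast hA'
      have h3 : (d' : ℤ) * (s : ℤ) = (d : ℤ) := by exact_mod_cast hsd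
      linear_combination m * h1 + (A:ℤ) * hq + ((s:ℤ)*q) * h2 + ((A':ℤ)*q) * h3
    exact ⟨m * α + A' * q, by linarith [key]⟩

lemma Ev_zero (c : ℕ → ℚ) (N : ℕ) (hc0 : c 0 = 0) : Ev c N 0 = 0 := by
  apply Finset.sum_eq_zero
  intro j _
  match j with
  | 0 => simp [hc0]
  | j + 1 => simp

lemma Ev_cf_two (a : ℕ → ℕ) (t : ℚ) : Ev (cf a 2) 2 t = t := by
  rw [Ev, Finset.sum_range_succ, Finset.sum_range_one]
  simp [cf]

lemma Ev_cf_succ (a : ℕ → ℕ) (k : ℕ) (hk : 2 ≤ k) (t : ℚ) :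
    Ev (cf a (k + 1)) (k + 1) t
      = Ev (Sh (cf a k)) (k + 1) t + (a (k + 1) : ℚ) / 2 * Ev (cf a k) k t := by
  have h1 : Ev (cf a k) (k + 1) t = Ev (cf a k) k t := by
    rw [Ev, Ev, Finset.sum_range_succ, cf_eq_zero_of_le a k k le_rfl]
    simp
  rw [← h1, Ev, Ev, Ev, Finset.mul_sum, ← Finset.sum_add_distrib]
  apply Finset.sum_congr rfl
  intro j _
  rw [cf_succ a k hk j]
  ring

lemma prod_Icc_cast_pos (a : ℕ → ℕ) (ha : ∀ i, 1 ≤ a i) (k : ℕ) :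
    0 < ∏ i ∈ Finset.Icc 1 k, (a i : ℚ) := by
  apply Finset.prod_pos
  intro i _
  have := ha i
  positivity

lemma base_case (a : ℕ → ℕ) (ha : ∀ i, 1 ≤ a i) (n : ℕ)
    (hdvd : (gcdUpTo a 2 : ℤ) ∣ (n : ℤ)) (hns : sMinus a 2 ≤ (n : ℤ)) :
    (gcdUpTo a 2 : ℚ) / (∏ i ∈ Finset.Icc 1 2, (a i : ℚ)) *
      Ev (cf a 2) 2 ((n : ℚ) - ((sMinus a 2 : ℤ) : ℚ)) ≤ (D a 2 n : ℚ) := by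
  have ha1 := ha 1
  have ha2 := ha 2
  set d' := gcdUpTo a 2 with hd'
  have hgcd2 : Nat.gcd (a 1) (a 2) = d' := by
    rw [hd', show (2:ℕ) = 1 + 1 from rfl, gcdUpTo_succ, gcdUpTo_one]
  have hd'pos : 0 < d' := gcdUpTo_pos a ha 2 (by omega)
  have hd'1 : d' ∣ a 1 := gcdUpTo_dvd a 2 1 le_rfl (by omega)
  have hd'2 : d' ∣ a 2 := gcdUpTo_dvd a 2 2 (by omega) le_rfl
  obtain ⟨x0, hx0lt, hx0dvd⟩ :=
    exists_x0 (a 1) (a 2) d' (by omega) hd'pos hd'1 hd'2 hgcd2 (n : ℤ) hdvd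
  set s1 := a 1 / d' with hs1def
  have hs1 : d' * s1 = a 1 := Nat.mul_div_cancel' hd'1
  have hs1pos : 0 < s1 := by
    rcases Nat.eq_zero_or_pos s1 with h | h
    · rw [h] at hs1; omega
    · exact h
  have hs2 : sMinus a 2 = -(a 1 : ℤ) + ((s1 : ℤ) - 1) * (a 2 : ℤ) := by
    rw [show (2:ℕ) = 1 + 1 from rfl, sMinus_succ a 1 le_rfl, gcdUpTo_one]
    rfl
  set u : ℤ := (n : ℤ) - (a 2 : ℤ) * x0 with hu_def
  have hu1 : (a 1 : ℤ) ∣ u := hx0dvd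
  have hx0le : (x0 : ℤ) ≤ (s1 : ℤ) - 1 := by
    have := hx0lt
    omega
  have ha2nn : (0:ℤ) ≤ (a 2 : ℤ) := by positivity
  have hu_ge : -(a 1 : ℤ) ≤ u := by
    rw [hs2] at hns
    nlinarith [mul_le_mul_of_nonneg_right hx0le ha2nn]
  have hprod2 : (∏ i ∈ Finset.Icc 1 2, (a i : ℚ)) = (a 1 : ℚ) * (a 2 : ℚ) := by
    rw [show Finset.Icc 1 2 = {1, 2} from rfl, Finset.prod_pair (by omega)]
  rcases lt_or_ge u 0 with hu | hu
  · -- degenerate: u = -(a 1), n = sMinus a 2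
    obtain ⟨c, hc⟩ := hu1
    have hcneg : c ≤ -1 := by nlinarith
    have hule : u ≤ -(a 1 : ℤ) := by nlinarith
    have hueq : u = -(a 1 : ℤ) := le_antisymm hule hu_ge
    have hneq : (n : ℤ) = sMinus a 2 := by
      have h1 : (n : ℤ) - sMinus a 2 ≤ 0 := by
        rw [hs2]
        nlinarith [mul_le_mul_of_nonneg_right hx0le ha2nn]
      omega
    rw [show (n : ℚ) - ((sMinus a 2 : ℤ) : ℚ) = 0 from by
      rw [← hneq]; push_cast; ring]
    rw [Ev_zero _ _ (cf_zero a 2), mul_zero]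
    positivity
  · set u' := u.toNat with hu'def
    have hu' : (u' : ℤ) = u := Int.toNat_of_nonneg hu
    set X := a 2 * x0 with hX
    have hXz : (X : ℤ) = (a 2 : ℤ) * x0 := by push_cast; rfl
    have nsplit : n = X + u' := by omega
    set h : ℕ := s1 * a 2 with hh
    have hhpos : 0 < h := by positivity
    have ha1h : a 1 ∣ h := by
      obtain ⟨c, hc⟩ := hd'2
      exact ⟨c, by rw [hh, hc, ← hs1]; ring⟩
    have ha1_le_h : a 1 ≤ h := by
      calc a 1 = d' * s1 := hs1.symm
        _ ≤ a 2 * s1 := Nat.mul_le_mul_right s1 (Nat.le_of_dvd (by omega) hd'2)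
        _ = h := by rw [hh]; ring
    set L := u' / h with hL
    set r := u' % h with hr
    have hLr : h * L + r = u' := Nat.div_add_mod u' h
    have hLr2 : L * h + r = u' := by rw [Nat.mul_comm L h]; exact hLr
    have hrlt : r < h := Nat.mod_lt u' hhpos
    have ha1u : a 1 ∣ u' := by
      rwa [← Int.natCast_dvd_natCast, hu']
    have ha1r : a 1 ∣ r := by
      have : r = u' - h * L := by omega
      rw [this]
      exact Nat.dvd_sub ha1u (Dvd.dvd.mul_right ha1h L)
    have hr_le : r ≤ h - a 1 := by
      obtain ⟨r1, hr1⟩ := ha1r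
      obtain ⟨h1, hh1⟩ := ha1h
      have : r1 < h1 := by
        by_contra hcon
        push_neg at hcon
        have : h ≤ r := by
          rw [hr1, hh1]; exact Nat.mul_le_mul_left _ hcon
        omega
      have : r1 ≤ h1 - 1 := by omega
      have : a 1 * r1 ≤ a 1 * (h1 - 1) := Nat.mul_le_mul_left _ this
      rw [hr1, hh1]
      have hh1pos : 0 < h1 := by
        rcases Nat.eq_zero_or_pos h1 with hz | hz
        · rw [hz] at hh1; omega
        · exact hz
      calc a 1 * r1 ≤ a 1 * (h1 - 1) := ‹_›
        _ = a 1 * h1 - a 1 := by rw [Nat.mul_sub_one]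
    set W := (Finset.range (L + 1)).image (fun l => x0 + l * s1) with hW
    have hexp : ∀ l : ℕ, a 2 * (x0 + l * s1) = X + l * h := by
      intro l
      rw [hX, hh]
      ring
    have hWle : ∀ w ∈ W, a (1 + 1) * w ≤ n := by
      intro w hw
      rw [hW, Finset.mem_image] at hw
      obtain ⟨l, hl, rfl⟩ := hw
      simp only [Finset.mem_range] at hl
      have hlh : l * h ≤ L * h := Nat.mul_le_mul_right h (by omega)
      have h2 : a 2 * (x0 + l * s1) = X + l * h := hexp l
      have h12 : a (1 + 1) = a 2 := rfl
      rw [h12, h2]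
      omega
    have hinj : Set.InjOn (fun l => x0 + l * s1) (Finset.range (L + 1)) := by
      intro l _ l' _ e
      simp only at e
      have : l * s1 = l' * s1 := by omega
      exact Nat.eq_of_mul_eq_mul_right hs1pos this
    have hsum := D_step_ge a ha 1 n W hWle
    have himg : ∑ w ∈ W, D a 1 (n - a (1 + 1) * w)
        = ∑ l ∈ Finset.range (L + 1), D a 1 (n - a 2 * (x0 + l * s1)) := by
      rw [hW, Finset.sum_image hinj]
    have hterm : ∀ l ∈ Finset.range (L + 1), 1 ≤ D a 1 (n - a 2 * (x0 + l * s1)) := by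
      intro l hl
      simp only [Finset.mem_range] at hl
      apply D_one_ge a ha
      have hlh : l * h ≤ L * h := Nat.mul_le_mul_right h (by omega)
      have hval : n - a 2 * (x0 + l * s1) = u' - l * h := by
        rw [hexp l]; omega
      rw [hval]
      exact Nat.dvd_sub ha1u (ha1h.mul_left l)
    have hcount : L + 1 ≤ D a 2 n := by
      calc L + 1 = ∑ _l ∈ Finset.range (L + 1), 1 := by simp
        _ ≤ ∑ l ∈ Finset.range (L + 1), D a 1 (n - a 2 * (x0 + l * s1)) :=
            Finset.sum_le_sum hterm
        _ = ∑ w ∈ W, D a 1 (n - a (1 + 1) * w) := himg.symm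
        _ ≤ D a 2 n := hsum
    -- final arithmetic
    have hd'h : h * d' = a 1 * a 2 := by
      rw [hh, ← hs1]; ring
    have e2 : u + (a 1 : ℤ) ≤ ((L : ℤ) + 1) * h := by
      have h1 : (u' : ℤ) = (h : ℤ) * L + r := by exact_mod_cast hLr.symm
      have h2 : (r : ℤ) + a 1 ≤ h := by
        have : r + a 1 ≤ h := by omega
        exact_mod_cast this
      rw [← hu']
      linarith [h1, h2]
    have e1 : (n : ℤ) - sMinus a 2 ≤ u + (a 1 : ℤ) := by
      have hx0a2 := mul_le_mul_of_nonneg_right hx0le ha2nn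
      rw [hs2, hu_def]
      linarith [hx0a2]
    have e3 : (d' : ℤ) * ((n : ℤ) - sMinus a 2) ≤ ((L : ℤ) + 1) * ((a 1 : ℤ) * a 2) := by
      have hd'hz : (h : ℤ) * d' = (a 1 : ℤ) * a 2 := by exact_mod_cast hd'h
      have := mul_le_mul_of_nonneg_left (le_trans e1 e2) (by positivity : (0:ℤ) ≤ (d' : ℤ))
      calc (d' : ℤ) * ((n : ℤ) - sMinus a 2) ≤ (d' : ℤ) * (((L : ℤ) + 1) * h) := this
        _ = ((L : ℤ) + 1) * ((h : ℤ) * d') := by ring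
        _ = ((L : ℤ) + 1) * ((a 1 : ℤ) * a 2) := by rw [hd'hz]
    rw [hprod2, Ev_cf_two]
    rw [div_mul_eq_mul_div, div_le_iff₀ (by positivity)]
    calc (d' : ℚ) * ((n : ℚ) - ((sMinus a 2 : ℤ) : ℚ))
        ≤ ((L : ℚ) + 1) * ((a 1 : ℚ) * a 2) := by exact_mod_cast e3
      _ ≤ (D a 2 n : ℚ) * ((a 1 : ℚ) * a 2) := by
          have : ((L : ℚ) + 1) ≤ (D a 2 n : ℚ) := by exact_mod_cast hcount
          have hpos : (0:ℚ) < (a 1 : ℚ) * a 2 := by positivity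
          nlinarith

lemma step_case (a : ℕ → ℕ) (ha : ∀ i, 1 ≤ a i) (k : ℕ) (hk : 2 ≤ k)
    (IH : ∀ n : ℕ, (gcdUpTo a k : ℤ) ∣ (n : ℤ) → sMinus a k ≤ (n : ℤ) →
      (gcdUpTo a k : ℚ) / (∏ i ∈ Finset.Icc 1 k, (a i : ℚ)) *
        Ev (cf a k) k ((n : ℚ) - ((sMinus a k : ℤ) : ℚ)) ≤ (D a k n : ℚ))
    (n : ℕ) (hdvd : (gcdUpTo a (k + 1) : ℤ) ∣ (n : ℤ))
    (hns : sMinus a (k + 1) ≤ (n : ℤ)) :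
    (gcdUpTo a (k + 1) : ℚ) / (∏ i ∈ Finset.Icc 1 (k + 1), (a i : ℚ)) *
      Ev (cf a (k + 1)) (k + 1) ((n : ℚ) - ((sMinus a (k + 1) : ℤ) : ℚ))
      ≤ (D a (k + 1) n : ℚ) := by
  have hApos := ha (k + 1)
  set A := a (k + 1) with hA
  set d := gcdUpTo a k with hd
  set d' := gcdUpTo a (k + 1) with hd'
  have hgcd : Nat.gcd d A = d' := (gcdUpTo_succ a k).symm
  have hdpos : 0 < d := gcdUpTo_pos a ha k (by omega)
  have hd'pos : 0 < d' := gcdUpTo_pos a ha (k + 1) (by omega)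
  have hd'd : d' ∣ d := gcdUpTo_succ_dvd a k
  have hd'A : d' ∣ A := gcdUpTo_succ_dvd_a a k
  obtain ⟨x0, hx0lt, hx0dvd⟩ := exists_x0 d A d' hdpos hd'pos hd'd hd'A hgcd (n : ℤ) hdvd
  set s := d / d' with hsdef
  have hs : d' * s = d := Nat.mul_div_cancel' hd'd
  have hspos : 0 < s := by
    rcases Nat.eq_zero_or_pos s with h | h
    · rw [h] at hs; omega
    · exact h
  have hsm : sMinus a (k + 1) = sMinus a k + ((s : ℤ) - 1) * (A : ℤ) := by
    rw [sMinus_succ a k (by omega)]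
  have hsk_ge : -(d : ℤ) ≤ sMinus a k := sMinus_ge a ha k (by omega)
  have hx0le : (x0 : ℤ) ≤ (s : ℤ) - 1 := by
    have := hx0lt; omega
  have hAnn : (0 : ℤ) ≤ (A : ℤ) := by positivity
  set m0Z : ℤ := (n : ℤ) - (A : ℤ) * x0 with hm0def
  have hm0_dvd : (d : ℤ) ∣ m0Z := hx0dvd
  have hm0_ge : sMinus a k ≤ m0Z := by
    have hx0A := mul_le_mul_of_nonneg_right hx0le hAnn
    rw [hsm] at hns
    rw [hm0def]
    linarith [hx0A]
  rcases lt_or_ge m0Z 0 with hm0 | hm0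
  · -- degenerate case : n = sMinus a (k+1)
    obtain ⟨c, hc⟩ := hm0_dvd
    have hdz : (0:ℤ) < (d:ℤ) := by exact_mod_cast hdpos
    have hcneg : c ≤ -1 := by
      by_contra hne
      have h2 : (0:ℤ) ≤ c := by omega
      have := mul_le_mul_of_nonneg_left h2 (le_of_lt hdz)
      rw [hc] at hm0
      linarith
    have hm0le : m0Z ≤ -(d : ℤ) := by
      have := mul_le_mul_of_nonneg_left hcneg (le_of_lt hdz)
      rw [hc]
      linarith
    have hx0A := mul_le_mul_of_nonneg_right hx0le hAnn
    have hneq : (n : ℤ) = sMinus a (k + 1) := by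
      have h1 : (n : ℤ) - sMinus a (k + 1) ≤ 0 := by
        rw [hsm, hm0def] at *
        linarith [hx0A]
      omega
    rw [show (n : ℚ) - ((sMinus a (k + 1) : ℤ) : ℚ) = 0 from by
      rw [← hneq]; push_cast; ring]
    rw [Ev_zero _ _ (cf_zero a (k + 1)), mul_zero]
    positivity
  · -- main case
    set m0 : ℕ := m0Z.toNat with hm0'def
    have hm0' : (m0 : ℤ) = m0Z := Int.toNat_of_nonneg hm0
    set h : ℕ := A * s with hhdef
    have hhpos : 0 < h := by positivity
    have hd_dvd_h : d ∣ h := by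
      obtain ⟨c, hc⟩ := hd'A
      exact ⟨c, by rw [hhdef, hc, ← hs]; ring⟩
    set tZ : ℤ := m0Z - sMinus a k with htZdef
    have htZ : 0 ≤ tZ := by rw [htZdef]; linarith
    set L : ℕ := (tZ / (h : ℤ)).toNat with hLdef
    have hLeq : (L : ℤ) = tZ / (h : ℤ) :=
      Int.toNat_of_nonneg (Int.ediv_nonneg htZ (by positivity))
    have hdm := Int.mul_ediv_add_emod tZ (h : ℤ)
    have hmod_nn : 0 ≤ tZ % (h : ℤ) := Int.emod_nonneg tZ (by positivity)
    have hmod_lt : tZ % (h : ℤ) < (h : ℤ) := Int.emod_lt_of_pos tZ (by positivity)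
    have hLb1 : (L : ℤ) * (h : ℤ) ≤ tZ := by rw [hLeq]; linarith
    have hLb2 : tZ < ((L : ℤ) + 1) * (h : ℤ) := by rw [hLeq]; linarith
    set P := ∏ i ∈ Finset.Icc 1 k, (a i : ℚ) with hP
    have hPpos : 0 < P := prod_Icc_cast_pos a ha k
    have hprod : ∏ i ∈ Finset.Icc 1 (k + 1), (a i : ℚ) = P * (A : ℚ) := by
      rw [hP, Finset.prod_Icc_succ_top (by omega : 1 ≤ k + 1)]
    set Wl := (Finset.range (L + 1)).filter (fun l => A * (x0 + l * s) ≤ n) with hWl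
    set W := Wl.image (fun l => x0 + l * s) with hW
    have hWle : ∀ w ∈ W, a (k + 1) * w ≤ n := by
      intro w hw
      rw [hW, Finset.mem_image] at hw
      obtain ⟨l, hl, rfl⟩ := hw
      rw [hWl, Finset.mem_filter] at hl
      exact hl.2
    have hsum := D_step_ge a ha k n W hWle
    have hinj : Set.InjOn (fun l => x0 + l * s) (Wl : Set ℕ) := by
      intro l _ l' _ e
      simp only at e
      have : l * s = l' * s := by omega
      exact Nat.eq_of_mul_eq_mul_right hspos this
    have himg : ∑ w ∈ W, D a k (n - a (k + 1) * w)
        = ∑ l ∈ Wl, D a k (n - A * (x0 + l * s)) := by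
      rw [hW, Finset.sum_image hinj]
    -- cast: for l ≤ L, (l : ℤ) * h ≤ tZ
    have hlh : ∀ l : ℕ, l < L + 1 → (l : ℤ) * (h : ℤ) ≤ tZ := by
      intro l hl
      have h1 : (l : ℤ) ≤ (L : ℤ) := by exact_mod_cast Nat.lt_succ_iff.mp hl
      have := mul_le_mul_of_nonneg_right h1 (by positivity : (0:ℤ) ≤ (h : ℤ))
      linarith
    -- each term of the IH sum
    have hterm : ∀ l ∈ Wl,
        (d : ℚ) / P * Ev (cf a k) k ((tZ : ℚ) - (l : ℚ) * (h : ℚ))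
          ≤ (D a k (n - A * (x0 + l * s)) : ℚ) := by
      intro l hl
      rw [hWl, Finset.mem_filter, Finset.mem_range] at hl
      obtain ⟨hlL, hln⟩ := hl
      set ml : ℕ := n - A * (x0 + l * s) with hml
      have hmlZ : (ml : ℤ) = m0Z - (l : ℤ) * (h : ℤ) := by
        rw [hml, hm0def, hhdef]
        push_cast [Nat.cast_sub hln]
        ring
      have hdvd_ml : (d : ℤ) ∣ (ml : ℤ) := by
        rw [hmlZ]
        apply dvd_sub hm0_dvd
        have : (d : ℤ) ∣ (h : ℤ) := by exact_mod_cast Int.natCast_dvd_natCast.mpr hd_dvd_h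
        exact Dvd.dvd.mul_left this (l : ℤ)
      have hge_ml : sMinus a k ≤ (ml : ℤ) := by
        rw [hmlZ]
        have := hlh l hlL
        rw [htZdef] at this
        linarith
      have harg : (ml : ℚ) - ((sMinus a k : ℤ) : ℚ) = (tZ : ℚ) - (l : ℚ) * (h : ℚ) := by
        have : ((ml : ℤ) : ℚ) = ((m0Z - (l : ℤ) * (h : ℤ) : ℤ) : ℚ) := by exact_mod_cast hmlZ
        push_cast at this ⊢
        rw [htZdef]
        push_cast
        linarith [this]
      have := IH ml hdvd_ml hge_ml
      rw [harg] at this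
      exact this
    -- terms outside the filter vanish
    have hzero : ∀ l ∈ Finset.range (L + 1), l ∉ Wl →
        (d : ℚ) / P * Ev (cf a k) k ((tZ : ℚ) - (l : ℚ) * (h : ℚ)) = 0 := by
      intro l hlr hlnot
      rw [Finset.mem_range] at hlr
      rw [hWl, Finset.mem_filter] at hlnot
      push_neg at hlnot
      have hln := hlnot (Finset.mem_range.mpr hlr)
      -- n < A * (x0 + l * s), so m0Z - l * h < 0
      have hneg : m0Z - (l : ℤ) * (h : ℤ) < 0 := by
        rw [hm0def, hhdef]
        have : (n : ℤ) < (A : ℤ) * ((x0 : ℤ) + (l : ℤ) * (s : ℤ)) := by exact_mod_cast hln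
        push_cast
        linarith [this]
      have hge : sMinus a k ≤ m0Z - (l : ℤ) * (h : ℤ) := by
        have := hlh l hlr
        rw [htZdef] at this
        linarith
      have hdvd_x : (d : ℤ) ∣ (m0Z - (l : ℤ) * (h : ℤ)) := by
        apply dvd_sub hm0_dvd
        have : (d : ℤ) ∣ (h : ℤ) := by exact_mod_cast Int.natCast_dvd_natCast.mpr hd_dvd_h
        exact Dvd.dvd.mul_left this (l : ℤ)
      obtain ⟨c, hc⟩ := hdvd_x
      have hcn : (d : ℤ) * c < 0 := by rw [← hc]; exact hneg
      have hcg : -(d : ℤ) ≤ (d : ℤ) * c := by rw [← hc]; linarith [hge, hsk_ge]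
      have hdz : (0:ℤ) < (d:ℤ) := by exact_mod_cast hdpos
      have hc1 : c = -1 := by
        by_contra hne
        rcases lt_or_gt_of_ne hne with hlt | hgt
        · have h2 : c ≤ -2 := by omega
          have := mul_le_mul_of_nonneg_left h2 (le_of_lt hdz)
          linarith
        · have h2 : (0:ℤ) ≤ c := by omega
          have := mul_le_mul_of_nonneg_left h2 (le_of_lt hdz)
          linarith
      have hxval : m0Z - (l : ℤ) * (h : ℤ) = -(d : ℤ) := by rw [hc, hc1]; ring
      have hskeq : sMinus a k = -(d : ℤ) := le_antisymm (hxval ▸ hge) hsk_ge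
      have hteq : (tZ : ℚ) - (l : ℚ) * (h : ℚ) = 0 := by
        have : tZ - (l : ℤ) * (h : ℤ) = 0 := by
          rw [htZdef, hskeq]
          linarith [hxval]
        have hcast : ((tZ - (l : ℤ) * (h : ℤ) : ℤ) : ℚ) = 0 := by exact_mod_cast this
        push_cast at hcast
        linarith [hcast]
      rw [hteq, Ev_zero _ _ (cf_zero a k), mul_zero]
    -- assemble the sum bound
    have hsum_ge : (d : ℚ) / P *
        ∑ l ∈ Finset.range (L + 1), Ev (cf a k) k ((tZ : ℚ) - (l : ℚ) * (h : ℚ))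
        ≤ (D a (k + 1) n : ℚ) := by
      rw [Finset.mul_sum]
      calc ∑ l ∈ Finset.range (L + 1),
            (d : ℚ) / P * Ev (cf a k) k ((tZ : ℚ) - (l : ℚ) * (h : ℚ))
          = ∑ l ∈ Wl, (d : ℚ) / P * Ev (cf a k) k ((tZ : ℚ) - (l : ℚ) * (h : ℚ)) := by
            symm
            apply Finset.sum_subset (Finset.filter_subset _ _) hzero
        _ ≤ ∑ l ∈ Wl, (D a k (n - A * (x0 + l * s)) : ℚ) := Finset.sum_le_sum hterm
        _ = ((∑ l ∈ Wl, D a k (n - A * (x0 + l * s)) : ℕ) : ℚ) := by push_cast; rfl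
        _ ≤ (D a (k + 1) n : ℚ) := by
            have : ∑ l ∈ Wl, D a k (n - A * (x0 + l * s)) ≤ D a (k + 1) n := by
              rw [← himg]; exact hsum
            exact_mod_cast this
    -- lower bound the sum by the integral expression
    have hQpos : (0 : ℚ) < (h : ℚ) := by exact_mod_cast hhpos
    have hslb := sum_lb (cf a k) k (cf_nonneg a k) (cf_zero a k) (h : ℚ) hQpos L (tZ : ℚ)
      (by exact_mod_cast htZ)
      (by exact_mod_cast hLb1)
      (by exact_mod_cast hLb2)
    have hx0A := mul_le_mul_of_nonneg_right hx0le hAnn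
    have hdnn : (0:ℚ) ≤ (d : ℚ) / P := by positivity
    have hfinal_sum : (d : ℚ) / P *
        (1 / (h : ℚ) * Ev (Sh (cf a k)) (k + 1) (tZ : ℚ) + 1 / 2 * Ev (cf a k) k (tZ : ℚ))
        ≤ (D a (k + 1) n : ℚ) :=
      le_trans (mul_le_mul_of_nonneg_left hslb hdnn) hsum_ge
    set uQ := (n : ℚ) - ((sMinus a (k + 1) : ℤ) : ℚ) with huQ
    have huQ0 : 0 ≤ uQ := by
      rw [huQ]
      have : ((sMinus a (k + 1) : ℤ) : ℚ) ≤ ((n : ℤ) : ℚ) := by exact_mod_cast hns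
      push_cast at this ⊢
      linarith
    have huQt : uQ ≤ (tZ : ℚ) := by
      have hZ : (n : ℤ) - sMinus a (k + 1) ≤ tZ := by
        rw [htZdef, hm0def, hsm]
        linarith [hx0A]
      rw [huQ]
      have : (((n : ℤ) - sMinus a (k + 1) : ℤ) : ℚ) ≤ ((tZ : ℤ) : ℚ) := by exact_mod_cast hZ
      push_cast at this
      linarith
    have hmonoQ : Ev (Sh (cf a k)) (k + 1) uQ ≤ Ev (Sh (cf a k)) (k + 1) (tZ : ℚ) :=
      Ev_mono _ _ _ _ (Sh_nonneg _ (cf_nonneg a k)) huQ0 huQt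
    have hmonoq : Ev (cf a k) k uQ ≤ Ev (cf a k) k (tZ : ℚ) :=
      Ev_mono _ _ _ _ (cf_nonneg a k) huQ0 huQt
    have hqnn : 0 ≤ Ev (cf a k) k uQ := Ev_nonneg _ _ _ (cf_nonneg a k) huQ0
    rw [hprod, Ev_cf_succ a k hk]
    have hcast_d : (d : ℚ) = (d' : ℚ) * (s : ℚ) := by exact_mod_cast hs.symm
    have hcast_h : (h : ℚ) = (A : ℚ) * (s : ℚ) := by
      rw [hhdef]; push_cast; ring
    have hd'le : (d' : ℚ) ≤ (d : ℚ) := by exact_mod_cast Nat.le_of_dvd hdpos hd'd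
    have hAQ : (0:ℚ) < (A : ℚ) := by exact_mod_cast hApos
    have hsQ : (0:ℚ) < (s : ℚ) := by exact_mod_cast hspos
    calc (d' : ℚ) / (P * (A : ℚ)) *
          (Ev (Sh (cf a k)) (k + 1) uQ + (A : ℚ) / 2 * Ev (cf a k) k uQ)
        = (d' : ℚ) / (P * (A : ℚ)) * Ev (Sh (cf a k)) (k + 1) uQ
            + (d' : ℚ) / (2 * P) * Ev (cf a k) k uQ := by
          field_simp
      _ ≤ (d' : ℚ) / (P * (A : ℚ)) * Ev (Sh (cf a k)) (k + 1) (tZ : ℚ)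
            + (d : ℚ) / (2 * P) * Ev (cf a k) k (tZ : ℚ) := by
          apply add_le_add
          · exact mul_le_mul_of_nonneg_left hmonoQ (by positivity)
          · apply mul_le_mul ?_ hmonoq hqnn (by positivity)
            gcongr
      _ = (d : ℚ) / P *
            (1 / (h : ℚ) * Ev (Sh (cf a k)) (k + 1) (tZ : ℚ) + 1 / 2 * Ev (cf a k) k (tZ : ℚ)) := by
          rw [hcast_d, hcast_h]
          field_simp
      _ ≤ (D a (k + 1) n : ℚ) := hfinal_sum

theorem S_ind (a : ℕ → ℕ) (ha : ∀ i, 1 ≤ a i) (k : ℕ) (hk : 2 ≤ k) :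
    ∀ n : ℕ, (gcdUpTo a k : ℤ) ∣ (n : ℤ) → sMinus a k ≤ (n : ℤ) →
      (gcdUpTo a k : ℚ) / (∏ i ∈ Finset.Icc 1 k, (a i : ℚ)) *
        Ev (cf a k) k ((n : ℚ) - ((sMinus a k : ℤ) : ℚ)) ≤ (D a k n : ℚ) := by
  induction k, hk using Nat.le_induction with
  | base => exact fun n h1 h2 => base_case a ha n h1 h2
  | succ k hk ih => exact fun n h1 h2 => step_case a ha k hk ih n h1 h2

/-- Inequality B. -/
theorem inequality_B (a : ℕ → ℕ) (ha : ∀ i, 1 ≤ a i) (k : ℕ) (hk : 2 ≤ k)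
    (hgcd : gcdUpTo a k = 1) (n : ℕ) (hn : sMinus a k ≤ (n : ℤ)) :
    (1 / ∏ i ∈ Finset.Icc 1 k, (a i : ℚ)) *
      ∑ i ∈ Finset.range (k - 1),
        bf a 2 ((k : ℤ) - 2) (i : ℤ) *
          ((n : ℚ) - (sMinus a k : ℚ)) ^ (k - 1 - i) / (Nat.factorial (k - 1 - i) : ℚ)
    ≤ (D a k n : ℚ) := by
  have h1 := S_ind a ha k hk n (by rw [hgcd]; exact one_dvd _) hn
  rw [hgcd] at h1
  rw [bf_sum_eq a k hk]
  calc (1 / ∏ i ∈ Finset.Icc 1 k, (a i : ℚ)) *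
        Ev (cf a k) k ((n : ℚ) - (sMinus a k : ℚ))
      = ((1:ℕ) : ℚ) / (∏ i ∈ Finset.Icc 1 k, (a i : ℚ)) *
        Ev (cf a k) k ((n : ℚ) - ((sMinus a k : ℤ) : ℚ)) := by norm_num
    _ ≤ (D a k n : ℚ) := h1
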